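/- Let d ≥ 1, h > 0, and let u : ℝ^d → [0,1] be measurable and Lebesgue integrable. Then ∫_{ℝ^d} ∫_{ℝ^d} exp(3|z|²/8)·G_1(z)·(1/√h)·( (1−u)(x)·u(x − √h·z) + u(x)·(1−u)(x − √h·z) ) dz dx ≤ (2^{d+2}/√h)·( ∫_{ℝ^d} u dx − ∫_{ℝ^d} u·(G_h ⋆ u) dx ). Equivalently, the left-hand side equals 2^{d+2}·E_{4h}(u) and is bounded by 2^{d+2}·E_h(u), where E_h(u) = (1/√h)·∫ (1−u)·(G_h ⋆ u) dx. -/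

import Mathlib

open MeasureTheory
open scoped ENNReal

/-- The Gaussian heat kernel `G_h(z) = (2πh)^{-d/2} exp(-|z|²/(2h))` on `ℝ^d`. -/
noncomputable def gauss (d : ℕ) (h : ℝ) (z : EuclideanSpace ℝ (Fin d)) : ℝ :=
  (2 * Real.pi * h) ^ (-(d : ℝ) / 2) * Real.exp (-‖z‖ ^ 2 / (2 * h))

/-- Convolution of two functions on `ℝ^d` w.r.t. Lebesgue measure. -/
noncomputable def conv (d : ℕ) (f g : EuclideanSpace ℝ (Fin d) → ℝ)
    (x : EuclideanSpace ℝ (Fin d)) : ℝ :=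
  ∫ y, f (x - y) * g y

/-!
Put `F(w) = ∫ u(x) (1 - u(x - w)) dx`. Since `a(1 - c) ≤ a(1 - b) + b(1 - c)` on `[0,1]`,
translation invariance makes `F` subadditive, in particular `F(2w) ≤ 2 F(w)`. By Tonelli the
left-hand side is `(1/√h) ∫ e^{3|z|²/8} G₁(z) (F(-√h z) + F(√h z)) dz`, and the substitution
`z = 2y` turns the weight into `2^d G₁(y)`, because `e^{3|2y|²/8} G₁(2y) = G₁(y)`. On the other
side `∫ u - ∫ u (G_h ⋆ u) = ∫ u (1 - G_h ⋆ u) = ∫ G_h(w) F(w) dw = ∫ G₁(y) F(±√h y) dy`.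
-/

open Set

theorem integrable_mul_of_mem_Icc {α : Type*} [MeasurableSpace α] {μ : Measure α} {f c : α → ℝ}
    (hf : Integrable f μ) (hc : Measurable c) (hc01 : ∀ x, c x ∈ Icc (0 : ℝ) 1) :
    Integrable (fun x => f x * c x) μ :=
  hf.mul_bdd hc.aestronglyMeasurable (c := 1) (.of_forall fun x => by
    rw [Real.norm_of_nonneg (hc01 x).1]; exact (hc01 x).2)

theorem mul_one_sub_le_of_mem_Icc {a b c : ℝ} (ha : a ∈ Icc (0 : ℝ) 1) (hb : b ∈ Icc (0 : ℝ) 1)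
    (hc : c ∈ Icc (0 : ℝ) 1) : a * (1 - c) ≤ a * (1 - b) + b * (1 - c) := by
  rcases le_total a b with hab | hab
  · nlinarith [mul_nonneg ha.1 (sub_nonneg.2 hb.2),
      mul_nonneg (sub_nonneg.2 hab) (sub_nonneg.2 hc.2)]
  · nlinarith [mul_nonneg hb.1 (sub_nonneg.2 ha.2), mul_nonneg hc.1 (sub_nonneg.2 hab)]

theorem lintegral_eq_ofReal_pow_mul_lintegral_comp_smul {E : Type*} [NormedAddCommGroup E]
    [NormedSpace ℝ E] [MeasurableSpace E] [BorelSpace E] [FiniteDimensional ℝ E]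
    (μ : Measure E) [μ.IsAddHaarMeasure] (f : E → ℝ≥0∞) {r : ℝ} (hr : 0 < r) :
    ∫⁻ x, f x ∂μ = ENNReal.ofReal (r ^ Module.finrank ℝ E) * ∫⁻ x, f (r • x) ∂μ := by
  have hmap : ∫⁻ x, f (r • x) ∂μ = ∫⁻ x, f x ∂(Measure.map (r • ·) μ) :=
    (lintegral_map_equiv f (Homeomorph.smulOfNeZero r hr.ne').toMeasurableEquiv).symm
  rw [hmap, Measure.map_addHaar_smul μ hr.ne', lintegral_smul_measure, smul_eq_mul, ← mul_assoc,
    ← ENNReal.ofReal_mul (by positivity), abs_of_pos (by positivity),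
    mul_inv_cancel₀ (by positivity), ENNReal.ofReal_one, one_mul]

section ShiftDefect

variable {G : Type*} [AddCommGroup G] [MeasurableSpace G]

/-- For `u = 𝟙 Ω` this is `μ (Ω \ (Ω + w))`. -/
noncomputable def shiftDefect (μ : Measure G) (u : G → ℝ) (w : G) : ℝ≥0∞ :=
  ∫⁻ x, ENNReal.ofReal (u x * (1 - u (x - w))) ∂μ

noncomputable def symmShiftDefect (μ : Measure G) (u : G → ℝ) (w : G) : ℝ≥0∞ :=
  shiftDefect μ u (-w) + shiftDefect μ u w

variable {μ : Measure G} {u : G → ℝ}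

theorem lintegral_ofReal_one_sub_mul_comp_sub [MeasurableAdd G] [μ.IsAddRightInvariant] (w : G) :
    ∫⁻ x, ENNReal.ofReal ((1 - u x) * u (x - w)) ∂μ = shiftDefect μ u (-w) := by
  rw [← lintegral_add_right_eq_self _ w]
  simp only [add_sub_cancel_right, shiftDefect, sub_neg_eq_add, mul_comm]

variable [MeasurableAdd₂ G] [MeasurableNeg G]

theorem measurable_shiftDefect [SFinite μ] (hu : Measurable u) : Measurable (shiftDefect μ u) :=
  Measurable.lintegral_prod_left (by fun_prop)

variable [μ.IsAddRightInvariant]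

theorem shiftDefect_add_le (hu : Measurable u) (hu01 : ∀ x, u x ∈ Icc (0 : ℝ) 1) (v w : G) :
    shiftDefect μ u (v + w) ≤ shiftDefect μ u v + shiftDefect μ u w := by
  have hpt : ∀ x, ENNReal.ofReal (u x * (1 - u (x - (v + w))))
      ≤ ENNReal.ofReal (u x * (1 - u (x - w)))
        + ENNReal.ofReal (u (x - w) * (1 - u (x - w - v))) := by
    intro x
    rw [← ENNReal.ofReal_add (mul_nonneg (hu01 _).1 (sub_nonneg.2 (hu01 _).2))
      (mul_nonneg (hu01 _).1 (sub_nonneg.2 (hu01 _).2)), add_comm v, ← sub_sub]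
    exact ENNReal.ofReal_le_ofReal (mul_one_sub_le_of_mem_Icc (hu01 _) (hu01 _) (hu01 _))
  have hshift : ∫⁻ x, ENNReal.ofReal (u (x - w) * (1 - u (x - w - v))) ∂μ = shiftDefect μ u v :=
    lintegral_sub_right_eq_self (fun y => ENNReal.ofReal (u y * (1 - u (y - v)))) w
  calc shiftDefect μ u (v + w)
      ≤ ∫⁻ x, (ENNReal.ofReal (u x * (1 - u (x - w)))
          + ENNReal.ofReal (u (x - w) * (1 - u (x - w - v)))) ∂μ := lintegral_mono hpt
    _ = shiftDefect μ u w + shiftDefect μ u v := by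
        rw [lintegral_add_left (by fun_prop), hshift]; rfl
    _ = _ := add_comm _ _

theorem symmShiftDefect_add_self_le (hu : Measurable u) (hu01 : ∀ x, u x ∈ Icc (0 : ℝ) 1)
    (w : G) : symmShiftDefect μ u (w + w) ≤ 2 * symmShiftDefect μ u w := by
  calc symmShiftDefect μ u (w + w)
      ≤ (shiftDefect μ u (-w) + shiftDefect μ u (-w))
        + (shiftDefect μ u w + shiftDefect μ u w) := by
        rw [symmShiftDefect, neg_add]
        exact add_le_add (shiftDefect_add_le hu hu01 _ _) (shiftDefect_add_le hu hu01 _ _)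
    _ = 2 * symmShiftDefect μ u w := by rw [symmShiftDefect]; ring

theorem lintegral_ofReal_mul_cross_eq (hu : Measurable u)
    (hu01 : ∀ x, u x ∈ Icc (0 : ℝ) 1) {c : ℝ} (hc : 0 ≤ c) (w : G) :
    ∫⁻ x, ENNReal.ofReal (c * ((1 - u x) * u (x - w) + u x * (1 - u (x - w)))) ∂μ
      = ENNReal.ofReal c * symmShiftDefect μ u w := by
  have hsplit : ∀ x, ENNReal.ofReal (c * ((1 - u x) * u (x - w) + u x * (1 - u (x - w))))
      = ENNReal.ofReal c * (ENNReal.ofReal ((1 - u x) * u (x - w))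
          + ENNReal.ofReal (u x * (1 - u (x - w)))) := fun x => by
    rw [ENNReal.ofReal_mul hc, ENNReal.ofReal_add (mul_nonneg (sub_nonneg.2 (hu01 _).2) (hu01 _).1)
      (mul_nonneg (hu01 _).1 (sub_nonneg.2 (hu01 _).2))]
  rw [lintegral_congr hsplit, lintegral_const_mul' _ _ ENNReal.ofReal_ne_top,
    lintegral_add_left (by fun_prop), lintegral_ofReal_one_sub_mul_comp_sub]
  rfl

theorem lintegral_lintegral_ofReal_mul_cross_eq [SFinite μ] {H : Type*} [MeasurableSpace H]
    {ν : Measure H} [SFinite ν] (hu : Measurable u) (hu01 : ∀ x, u x ∈ Icc (0 : ℝ) 1)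
    {k : H → ℝ} (hk : Measurable k) (hk_nonneg : ∀ z, 0 ≤ k z) {τ : H → G} (hτ : Measurable τ) :
    ∫⁻ x, ∫⁻ z, ENNReal.ofReal (k z * ((1 - u x) * u (x - τ z) + u x * (1 - u (x - τ z)))) ∂ν ∂μ
      = ∫⁻ z, ENNReal.ofReal (k z) * symmShiftDefect μ u (τ z) ∂ν := by
  rw [lintegral_lintegral_swap (by fun_prop)]
  exact lintegral_congr fun z => lintegral_ofReal_mul_cross_eq hu hu01 (hk_nonneg z) (τ z)

end ShiftDefect

section Gauss

variable {d : ℕ}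

@[fun_prop]
theorem measurable_gauss (h : ℝ) : Measurable (gauss d h) := by
  unfold gauss; fun_prop

theorem gauss_nonneg {h : ℝ} (hh : 0 ≤ h) (z : EuclideanSpace ℝ (Fin d)) : 0 ≤ gauss d h z := by
  unfold gauss; positivity

theorem gauss_neg (h : ℝ) (z : EuclideanSpace ℝ (Fin d)) : gauss d h (-z) = gauss d h z := by
  simp only [gauss, norm_neg]

theorem integral_gauss {h : ℝ} (hh : 0 < h) : ∫ z, gauss d h z = 1 := by
  have hexp : ∀ z : EuclideanSpace ℝ (Fin d),
      Real.exp (-‖z‖ ^ 2 / (2 * h)) = Real.exp (-(2 * h)⁻¹ * ‖z‖ ^ 2) := fun z => by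
    congr 1; field_simp
  simp only [gauss, hexp, integral_const_mul]
  rw [GaussianFourier.integral_rexp_neg_mul_sq_norm (by positivity), finrank_euclideanSpace_fin,
    show Real.pi / (2 * h)⁻¹ = 2 * Real.pi * h by field_simp, ← Real.rpow_add (by positivity),
    neg_div, neg_add_cancel, Real.rpow_zero]

theorem sqrt_pow_mul_gauss_sqrt_smul {h : ℝ} (hh : 0 < h) (y : EuclideanSpace ℝ (Fin d)) :
    Real.sqrt h ^ d * gauss d h (Real.sqrt h • y) = gauss d 1 y := by
  have hnorm : ‖Real.sqrt h • y‖ ^ 2 = h * ‖y‖ ^ 2 := by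
    rw [norm_smul, Real.norm_of_nonneg (Real.sqrt_nonneg h), mul_pow, Real.sq_sqrt hh.le]
  have hpow : Real.sqrt h ^ d = h ^ ((d : ℝ) / 2) := by
    rw [Real.sqrt_eq_rpow, ← Real.rpow_natCast, ← Real.rpow_mul hh.le, one_div_mul_eq_div]
  have hconst : h ^ ((d : ℝ) / 2) * (2 * Real.pi * h) ^ (-(d : ℝ) / 2)
      = (2 * Real.pi * 1) ^ (-(d : ℝ) / 2) := by
    rw [mul_one, Real.mul_rpow (by positivity) hh.le, mul_left_comm, ← Real.rpow_add hh, neg_div,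
      add_neg_cancel, Real.rpow_zero, mul_one]
  have hexp : -(h * ‖y‖ ^ 2) / (2 * h) = -‖y‖ ^ 2 / (2 * 1) := by field_simp
  rw [gauss, gauss, hpow, hnorm, ← mul_assoc, hconst, hexp]

theorem exp_mul_gauss_two_smul (y : EuclideanSpace ℝ (Fin d)) :
    Real.exp (3 * ‖(2 : ℝ) • y‖ ^ 2 / 8) * gauss d 1 ((2 : ℝ) • y) = gauss d 1 y := by
  have hnorm : ‖(2 : ℝ) • y‖ ^ 2 = 4 * ‖y‖ ^ 2 := by
    rw [norm_smul, Real.norm_two, mul_pow]; norm_num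
  rw [gauss, gauss, hnorm, mul_left_comm, ← Real.exp_add]
  ring_nf

theorem lintegral_gauss_mul_eq_lintegral_gauss_one_mul {h : ℝ} (hh : 0 < h)
    (g : EuclideanSpace ℝ (Fin d) → ℝ≥0∞) :
    ∫⁻ w, ENNReal.ofReal (gauss d h w) * g w
      = ∫⁻ y, ENNReal.ofReal (gauss d 1 y) * g (Real.sqrt h • y) := by
  rw [lintegral_eq_ofReal_pow_mul_lintegral_comp_smul volume _ (Real.sqrt_pos.2 hh),
    finrank_euclideanSpace_fin, ← lintegral_const_mul' _ _ ENNReal.ofReal_ne_top]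
  refine lintegral_congr fun y => ?_
  rw [← mul_assoc, ← ENNReal.ofReal_mul (by positivity), sqrt_pow_mul_gauss_sqrt_smul hh]

theorem lintegral_gauss_mul_comp_neg (h : ℝ) (g : EuclideanSpace ℝ (Fin d) → ℝ≥0∞) :
    ∫⁻ y, ENNReal.ofReal (gauss d h y) * g (-y) = ∫⁻ y, ENNReal.ofReal (gauss d h y) * g y := by
  rw [← lintegral_neg_eq_self]
  simp only [gauss_neg, neg_neg]

theorem lintegral_exp_mul_gauss_le (Φ : EuclideanSpace ℝ (Fin d) → ℝ≥0∞)
    (hΦ : ∀ y, Φ ((2 : ℝ) • y) ≤ 2 * Φ y) :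
    ∫⁻ z, ENNReal.ofReal (Real.exp (3 * ‖z‖ ^ 2 / 8) * gauss d 1 z) * Φ z
      ≤ 2 ^ (d + 1) * ∫⁻ y, ENNReal.ofReal (gauss d 1 y) * Φ y := by
  rw [lintegral_eq_ofReal_pow_mul_lintegral_comp_smul volume _ two_pos, finrank_euclideanSpace_fin]
  simp only [exp_mul_gauss_two_smul]
  calc ENNReal.ofReal (2 ^ d) * ∫⁻ y, ENNReal.ofReal (gauss d 1 y) * Φ ((2 : ℝ) • y)
      ≤ 2 ^ d * ∫⁻ y, 2 * (ENNReal.ofReal (gauss d 1 y) * Φ y) := by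
        rw [ENNReal.ofReal_pow zero_le_two, ENNReal.ofReal_ofNat]
        gcongr 2 ^ d * ?_
        refine lintegral_mono fun y => ?_
        rw [mul_left_comm (2 : ℝ≥0∞)]
        gcongr
        exact hΦ y
    _ = _ := by rw [lintegral_const_mul' _ _ ENNReal.ofNat_ne_top, ← mul_assoc, pow_succ]

end Gauss

section Conv

variable {d : ℕ} {K u : EuclideanSpace ℝ (Fin d) → ℝ}

theorem conv_eq_integral_mul_comp_sub (x : EuclideanSpace ℝ (Fin d)) :
    conv d K u x = ∫ w, K w * u (x - w) := by
  rw [conv, ← integral_sub_left_eq_self (fun w => K w * u (x - w)) volume x]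
  simp only [sub_sub_cancel]

theorem measurable_conv (hK : Measurable K) (hu : Measurable u) : Measurable (conv d K u) :=
  (Measurable.stronglyMeasurable (f := fun p : _ × _ => K (p.1 - p.2) * u p.2)
    (by fun_prop)).integral_prod_right'.measurable

theorem one_sub_conv_eq_integral (hK_one : ∫ x, K x = 1) (hu : Measurable u)
    (hu01 : ∀ x, u x ∈ Icc (0 : ℝ) 1) (x : EuclideanSpace ℝ (Fin d)) :
    1 - conv d K u x = ∫ w, K w * (1 - u (x - w)) := by
  have hK_int : Integrable K := .of_integral_ne_zero (by rw [hK_one]; exact one_ne_zero)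
  simp only [mul_one_sub]
  rw [integral_sub hK_int (integrable_mul_of_mem_Icc hK_int (by fun_prop) fun w => hu01 _), hK_one,
    conv_eq_integral_mul_comp_sub]

theorem conv_mem_Icc (hK_nonneg : ∀ x, 0 ≤ K x) (hK_one : ∫ x, K x = 1) (hu : Measurable u)
    (hu01 : ∀ x, u x ∈ Icc (0 : ℝ) 1) (x : EuclideanSpace ℝ (Fin d)) :
    conv d K u x ∈ Icc (0 : ℝ) 1 := by
  have hle : 0 ≤ 1 - conv d K u x := by
    rw [one_sub_conv_eq_integral hK_one hu hu01]
    exact integral_nonneg fun w => mul_nonneg (hK_nonneg w) (sub_nonneg.2 (hu01 _).2)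
  refine ⟨?_, by linarith⟩
  rw [conv_eq_integral_mul_comp_sub]
  exact integral_nonneg fun w => mul_nonneg (hK_nonneg w) (hu01 _).1

theorem ofReal_mul_one_sub_conv (hK_nonneg : ∀ x, 0 ≤ K x) (hK_one : ∫ x, K x = 1)
    (hu : Measurable u) (hu01 : ∀ x, u x ∈ Icc (0 : ℝ) 1) (x : EuclideanSpace ℝ (Fin d)) :
    ENNReal.ofReal (u x * (1 - conv d K u x))
      = ∫⁻ w, ENNReal.ofReal (K w) * ENNReal.ofReal (u x * (1 - u (x - w))) := by
  have hK_int : Integrable K := .of_integral_ne_zero (by rw [hK_one]; exact one_ne_zero)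
  have hnonneg : ∀ w, 0 ≤ u x * (1 - u (x - w)) := fun w =>
    mul_nonneg (hu01 x).1 (sub_nonneg.2 (hu01 _).2)
  have hbound : ∀ w, u x * (1 - u (x - w)) ∈ Icc (0 : ℝ) 1 := fun w =>
    ⟨hnonneg w, mul_le_one₀ (hu01 x).2 (sub_nonneg.2 (hu01 _).2) (by linarith [(hu01 (x - w)).1])⟩
  calc ENNReal.ofReal (u x * (1 - conv d K u x))
      = ENNReal.ofReal (∫ w, K w * (u x * (1 - u (x - w)))) := by
        rw [one_sub_conv_eq_integral hK_one hu hu01, ← integral_const_mul]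
        simp only [mul_left_comm (u x)]
    _ = ∫⁻ w, ENNReal.ofReal (K w * (u x * (1 - u (x - w)))) :=
        ofReal_integral_eq_lintegral_ofReal
          (integrable_mul_of_mem_Icc hK_int (by fun_prop) hbound)
          (.of_forall fun w => mul_nonneg (hK_nonneg w) (hnonneg w))
    _ = _ := lintegral_congr fun w => ENNReal.ofReal_mul (hK_nonneg w)

theorem ofReal_integral_sub_integral_mul_conv (hK : Measurable K) (hK_nonneg : ∀ x, 0 ≤ K x)
    (hK_one : ∫ x, K x = 1) (hu : Measurable u) (hu01 : ∀ x, u x ∈ Icc (0 : ℝ) 1)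
    (hu_int : Integrable u) :
    ENNReal.ofReal ((∫ x, u x) - ∫ x, u x * conv d K u x)
      = ∫⁻ w, ENNReal.ofReal (K w) * shiftDefect volume u w := by
  have hconv01 := conv_mem_Icc hK_nonneg hK_one hu hu01
  have hconv := measurable_conv hK hu
  calc ENNReal.ofReal ((∫ x, u x) - ∫ x, u x * conv d K u x)
      = ENNReal.ofReal (∫ x, u x * (1 - conv d K u x)) := by
        rw [← integral_sub hu_int (integrable_mul_of_mem_Icc hu_int hconv hconv01)]
        simp only [mul_one_sub]
    _ = ∫⁻ x, ENNReal.ofReal (u x * (1 - conv d K u x)) :=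
        ofReal_integral_eq_lintegral_ofReal
          (integrable_mul_of_mem_Icc hu_int (by fun_prop) fun x =>
            ⟨sub_nonneg.2 (hconv01 x).2, by linarith [(hconv01 x).1]⟩)
          (.of_forall fun x => mul_nonneg (hu01 x).1 (sub_nonneg.2 (hconv01 x).2))
    _ = ∫⁻ x, ∫⁻ w, ENNReal.ofReal (K w) * ENNReal.ofReal (u x * (1 - u (x - w))) :=
        lintegral_congr (ofReal_mul_one_sub_conv hK_nonneg hK_one hu hu01)
    _ = ∫⁻ w, ∫⁻ x, ENNReal.ofReal (K w) * ENNReal.ofReal (u x * (1 - u (x - w))) :=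
        lintegral_lintegral_swap (by fun_prop)
    _ = _ := lintegral_congr fun w => lintegral_const_mul' _ _ ENNReal.ofReal_ne_top

end Conv

theorem lintegral_gauss_one_mul_symmShiftDefect {d : ℕ} {h : ℝ} (hh : 0 < h)
    {u : EuclideanSpace ℝ (Fin d) → ℝ} (hu : Measurable u) (hu01 : ∀ x, u x ∈ Icc (0 : ℝ) 1)
    (hu_int : Integrable u) :
    ∫⁻ y, ENNReal.ofReal (gauss d 1 y) * symmShiftDefect volume u (Real.sqrt h • y)
      = 2 * ENNReal.ofReal ((∫ x, u x) - ∫ x, u x * conv d (gauss d h) u x) := by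
  have hF : Measurable (shiftDefect volume u) := measurable_shiftDefect hu
  have hhalf : ∫⁻ y, ENNReal.ofReal (gauss d 1 y) * shiftDefect volume u (Real.sqrt h • y)
      = ENNReal.ofReal ((∫ x, u x) - ∫ x, u x * conv d (gauss d h) u x) := by
    rw [← lintegral_gauss_mul_eq_lintegral_gauss_one_mul hh, ofReal_integral_sub_integral_mul_conv
      (measurable_gauss h) (gauss_nonneg hh.le) (integral_gauss hh) hu hu01 hu_int]
  simp only [symmShiftDefect, mul_add, ← smul_neg]
  rw [lintegral_add_left (by fun_prop),
    lintegral_gauss_mul_comp_neg 1 (fun y => shiftDefect volume u (Real.sqrt h • y)), hhalf,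
    two_mul]

theorem stmt_15_general (d : ℕ) (h : ℝ) (hh : 0 < h)
    (u : EuclideanSpace ℝ (Fin d) → ℝ)
    (hu_meas : Measurable u) (hu_range : ∀ x, u x ∈ Set.Icc (0 : ℝ) 1)
    (hu_int : Integrable u) :
    (∫⁻ x, ∫⁻ z, ENNReal.ofReal
        (Real.exp (3 * ‖z‖ ^ 2 / 8) * gauss d 1 z * (1 / Real.sqrt h) *
          ((1 - u x) * u (x - Real.sqrt h • z) + u x * (1 - u (x - Real.sqrt h • z)))))
      ≤ ENNReal.ofReal ((2 ^ (d + 2) / Real.sqrt h) *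
          ((∫ x, u x) - ∫ x, u x * conv d (gauss d h) u x)) := by
  set X := (∫ x, u x) - ∫ x, u x * conv d (gauss d h) u x
  set Φ := fun z => symmShiftDefect volume u (Real.sqrt h • z)
  have hΦ_doubling : ∀ y, Φ ((2 : ℝ) • y) ≤ 2 * Φ y := fun y => by
    simp only [Φ, two_smul, smul_add]
    exact symmShiftDefect_add_self_le hu_meas hu_range _
  calc _ = ∫⁻ z, ENNReal.ofReal (Real.exp (3 * ‖z‖ ^ 2 / 8) * gauss d 1 z * (1 / Real.sqrt h))
          * Φ z :=
        lintegral_lintegral_ofReal_mul_cross_eq hu_meas hu_range (by fun_prop)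
          (fun z => by have := gauss_nonneg zero_le_one z; positivity) (by fun_prop)
    _ = ENNReal.ofReal (1 / Real.sqrt h) *
          ∫⁻ z, ENNReal.ofReal (Real.exp (3 * ‖z‖ ^ 2 / 8) * gauss d 1 z) * Φ z := by
        rw [← lintegral_const_mul' _ _ ENNReal.ofReal_ne_top]
        refine lintegral_congr fun z => ?_
        rw [ENNReal.ofReal_mul' (by positivity)]
        ring
    _ ≤ ENNReal.ofReal (1 / Real.sqrt h) * (2 ^ (d + 1) * (2 * ENNReal.ofReal X)) := by
        rw [← lintegral_gauss_one_mul_symmShiftDefect hh hu_meas hu_range hu_int]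
        gcongr
        exact lintegral_exp_mul_gauss_le Φ hΦ_doubling
    _ = ENNReal.ofReal ((2 ^ (d + 2) / Real.sqrt h) * X) := by
        rw [ENNReal.ofReal_mul (by positivity), div_eq_mul_one_div (2 ^ (d + 2) : ℝ),
          ENNReal.ofReal_mul (by positivity), ENNReal.ofReal_pow zero_le_two, ENNReal.ofReal_ofNat]
        ring

theorem stmt_15 (d : ℕ) (hd : 1 ≤ d) (h : ℝ) (hh : 0 < h)
    (u : EuclideanSpace ℝ (Fin d) → ℝ)
    (hu_meas : Measurable u) (hu_range : ∀ x, u x ∈ Set.Icc (0 : ℝ) 1)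
    (hu_int : Integrable u) :
    (∫⁻ x, ∫⁻ z, ENNReal.ofReal
        (Real.exp (3 * ‖z‖ ^ 2 / 8) * gauss d 1 z * (1 / Real.sqrt h) *
          ((1 - u x) * u (x - Real.sqrt h • z) + u x * (1 - u (x - Real.sqrt h • z)))))
      ≤ ENNReal.ofReal ((2 ^ (d + 2) / Real.sqrt h) *
          ((∫ x, u x) - ∫ x, u x * conv d (gauss d h) u x)) :=
  stmt_15_general d h hh u hu_meas hu_range hu_int
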